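/- arXiv:1806.03955 — 5 statements merged into one kernel-verified Lean document; each statement's English description precedes it below -/
import Mathlib

section
/- Let I be an ideal of R = ℂ[x,y] such that n = dim_ℂ R/I is finite, and let k = dim_ℂ I/(𝔪·I). Then n ≥ k(k-1)/2. -/
open MvPolynomial

noncomputable section

/-- The polynomial ring `R = ℂ[x,y]`. -/
abbrev Rpoly : Type := MvPolynomial (Fin 2) ℂ

/-- The maximal ideal `𝔪 = ⟨x, y⟩` of `R` at the origin. -/
def mIdeal : Ideal Rpoly := Ideal.span {X 0, X 1}

/-- `μ(I) = dim_ℂ I/(𝔪·I)`, computed as the ℂ-dimension of the image of `I`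
in `R/(𝔪·I)` (this image is precisely `I/(𝔪·I)` since `𝔪·I ⊆ I`). -/
noncomputable def mu (I : Ideal Rpoly) : ℕ :=
  Module.finrank ℂ
    (Submodule.restrictScalars ℂ (I.map (Ideal.Quotient.mk (mIdeal * I))))

/-!
Let `r` be the order of `I`, i.e. `I ⊆ 𝔪^r` but `I ⊄ 𝔪^(r+1)`. Monomials of degree `< r` stay
linearly independent modulo `I`, so `n ≥ r(r+1)/2`; it remains to show `μ(I) ≤ r + 1`.

Filter `I/𝔪I` by the images `V_t` of `I ∩ 𝔪^t`, and let `L_t(J)` be the space of degree-`t`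
initial forms of elements of `J ∩ 𝔪^t`. Taking initial forms shows
`dim V_t + dim L_t(𝔪I) ≤ dim V_(t+1) + dim L_t(I)`, and for `t ≥ r` the space `L_t(I)` is nonzero,
so `x·L_t(I) + y·L_t(I) ⊆ L_(t+1)(𝔪I)` has dimension at least `dim L_t(I) + 1`. Hence
`dim V_t + dim L_t(𝔪I)` increases by at least one at each step `t ≥ r`. By Artin–Rees `V_T = 0`
for large `T`, where the quantity is at most `dim L_T(𝔪I) ≤ T + 1` (binary forms of degree `T`);
so `μ(I) = dim V_r ≤ r + 1`.
-/

open Module Finset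

section LinearAlgebra

variable {K E M N : Type*} [Field K] [AddCommGroup E] [Module K E] [AddCommGroup M] [Module K M]
  [AddCommGroup N] [Module K N]

lemma LinearMap.finrank_le_finrank_of_ker_le {g : E →ₗ[K] M} {h : E →ₗ[K] N}
    (hg : Function.Surjective g) (hh : Function.Surjective h) [FiniteDimensional K N]
    (hker : LinearMap.ker h ≤ LinearMap.ker g) : finrank K M ≤ finrank K N := by
  let e := h.quotKerEquivOfSurjective hh
  refine LinearMap.finrank_le_finrank_of_surjective
    (f := (LinearMap.ker h).liftQ g hker ∘ₗ e.symm) ?_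
  intro m
  obtain ⟨x, rfl⟩ := hg m
  refine ⟨h x, ?_⟩
  simp [e]

lemma finrank_map_add_finrank_le (S : Submodule K E) (a : E →ₗ[K] M) (b : E →ₗ[K] N)
    {P A : Submodule K M} {Q C : Submodule K N} [FiniteDimensional K P] [FiniteDimensional K Q]
    (hP : S.map a = P) (hQ : S.map b = Q) (hA : A ≤ P) (hC : C ≤ Q)
    (h : ∀ x ∈ S, b x ∈ C → a x ∈ A) :
    finrank K P + finrank K C ≤ finrank K A + finrank K Q := by
  -- `P`, `Q` name the images so that callers can supply their `FiniteDimensional` instances.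
  subst hP hQ
  set A' := A.comap (S.map a).subtype
  set C' := C.comap (S.map b).subtype
  have hquot : finrank K (S.map a ⧸ A') ≤ finrank K (S.map b ⧸ C') := by
    refine LinearMap.finrank_le_finrank_of_ker_le (g := A'.mkQ ∘ₗ a.submoduleMap S)
      (h := C'.mkQ ∘ₗ b.submoduleMap S) ?_ ?_ ?_
    · exact A'.mkQ_surjective.comp (a.submoduleMap_surjective S)
    · exact C'.mkQ_surjective.comp (b.submoduleMap_surjective S)
    · rintro ⟨x, hx⟩ hbx
      simpa [A', C'] using h x hx (by simpa [C'] using hbx)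
  have hA' := Submodule.finrank_quotient_add_finrank A'
  have hC' := Submodule.finrank_quotient_add_finrank C'
  rw [(Submodule.comapSubtypeEquivOfLe hA).finrank_eq] at hA'
  rw [(Submodule.comapSubtypeEquivOfLe hC).finrank_eq] at hC'
  omega

end LinearAlgebra

theorem Ideal.exists_inf_pow_le_mul {R : Type*} [CommRing R] [IsNoetherianRing R]
    (𝔞 I : Ideal R) : ∃ N, I ⊓ 𝔞 ^ N ≤ 𝔞 * I := by
  obtain ⟨k, hk⟩ := Ideal.exists_pow_inf_eq_pow_smul 𝔞 I
  refine ⟨k + 1, ?_⟩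
  have h := hk (k + 1) (by omega)
  rw [Nat.add_sub_cancel_left, pow_one] at h
  calc I ⊓ 𝔞 ^ (k + 1) = 𝔞 ^ (k + 1) • ⊤ ⊓ I := by rw [smul_eq_mul, Ideal.mul_top, inf_comm]
    _ = 𝔞 • (𝔞 ^ k • ⊤ ⊓ I) := h
    _ ≤ 𝔞 * I := Submodule.smul_mono le_rfl inf_le_right

namespace MvPolynomial

section CommSemiring

variable {σ R : Type*} [CommSemiring R]

lemma homogeneousComponent_mul_of_isHomogeneous {p : MvPolynomial σ R} {k : ℕ}
    (hp : p.IsHomogeneous k) (t : ℕ) (f : MvPolynomial σ R) :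
    homogeneousComponent (t + k) (p * f) = p * homogeneousComponent t f := by
  have hcomp (i : ℕ) : homogeneousComponent (t + k) (p * homogeneousComponent i f) =
      if i = t then p * homogeneousComponent t f else 0 := by
    rw [homogeneousComponent_of_mem (hp.mul (homogeneousComponent_isHomogeneous i f))]
    simp only [show t + k = k + i ↔ i = t by omega]
    split_ifs with hi
    · rw [hi]
    · rfl
  conv_lhs => rw [← sum_homogeneousComponent f, Finset.mul_sum, map_sum]
  rw [Finset.sum_congr rfl fun i _ => hcomp i, Finset.sum_ite_eq']
  split_ifs with ht
  · rfl
  · rw [homogeneousComponent_eq_zero _ _ (by simpa using ht), mul_zero]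

lemma mem_pow_idealOfVars_succ {t : ℕ} {f : MvPolynomial σ R} (hf : f ∈ idealOfVars σ R ^ t)
    (hft : homogeneousComponent t f = 0) : f ∈ idealOfVars σ R ^ (t + 1) := by
  rw [mem_pow_idealOfVars_iff'] at hf ⊢
  intro d hd
  rcases Nat.lt_succ_iff_lt_or_eq.mp hd with hd | hd
  · exact hf d hd
  · simpa [coeff_homogeneousComponent, hd] using congr_arg (coeff d) hft

lemma exists_le_pow_idealOfVars_not_le {I : Ideal (MvPolynomial σ R)} (hI : I ≠ ⊥) :
    ∃ r, I ≤ idealOfVars σ R ^ r ∧ ¬ I ≤ idealOfVars σ R ^ (r + 1) := by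
  classical
  obtain ⟨f, hfI, hf0⟩ := Submodule.exists_mem_ne_zero_of_ne_bot hI
  obtain ⟨d, hd⟩ := support_nonempty.mpr hf0
  have hex : ∃ t, ¬ I ≤ idealOfVars σ R ^ t := ⟨d.degree + 1, fun h => by
    have := (mem_pow_idealOfVars_iff _ f).mp (h hfI) d hd
    omega⟩
  have hpos : Nat.find hex ≠ 0 := fun h0 => Nat.find_spec hex (by simp [h0])
  refine ⟨Nat.find hex - 1, not_not.mp (Nat.find_min hex (by omega)), ?_⟩
  rw [Nat.sub_add_cancel (Nat.one_le_iff_ne_zero.mpr hpos)]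
  exact Nat.find_spec hex

end CommSemiring

section Field

variable {σ K : Type*} [Field K]

instance [Finite σ] (t : ℕ) : FiniteDimensional K (homogeneousSubmodule σ K t) :=
  Module.Finite.iff_fg.mpr (homogeneousSubmodule_fg σ K t)

lemma finrank_restrictSupport (s : Finset (σ →₀ ℕ)) :
    finrank K (restrictSupport K (s : Set (σ →₀ ℕ))) = #s := by
  rw [finrank_eq_card_basis (basisRestrictSupport K _)]
  simp

lemma homogeneousSubmodule_eq_restrictSupport [Fintype σ] [DecidableEq σ] (t : ℕ) :
    homogeneousSubmodule σ K t =
      restrictSupport K ((univ.finsuppAntidiag t : Finset (σ →₀ ℕ)) : Set (σ →₀ ℕ)) := by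
  rw [homogeneousSubmodule_eq_finsupp_supported]
  congr 1
  ext d
  simp [Finsupp.degree_eq_sum]

lemma finrank_restrictSupport_le_finrank_quotient {I : Ideal (MvPolynomial σ K)}
    [FiniteDimensional K (MvPolynomial σ K ⧸ I)] {r : ℕ} (hI : I ≤ idealOfVars σ K ^ r)
    {s : Set (σ →₀ ℕ)} (hs : ∀ d ∈ s, d.degree < r) :
    finrank K (restrictSupport K s) ≤ finrank K (MvPolynomial σ K ⧸ I) := by
  refine LinearMap.finrank_le_finrank_of_injective
    (f := (Ideal.Quotient.mkₐ K I).toLinearMap ∘ₗ (restrictSupport K s).subtype) ?_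
  refine (injective_iff_map_eq_zero _).mpr fun ⟨x, hxs⟩ hx => ?_
  have hxI : x ∈ idealOfVars σ K ^ r := hI (Ideal.Quotient.eq_zero_iff_mem.mp (by simpa using hx))
  have : x.support = ∅ := eq_empty_of_forall_notMem fun d hd =>
    (hs d ((mem_restrictSupport_iff K).mp hxs hd)).not_ge
      ((mem_pow_idealOfVars_iff r x).mp hxI d hd)
  simpa [support_eq_empty] using this

lemma finrank_add_one_le_of_X_mul_mem {i j : σ} (hij : i ≠ j) {V W : Submodule K (MvPolynomial σ K)}
    [FiniteDimensional K W] (hV : V ≠ ⊥) (hi : ∀ f ∈ V, X i * f ∈ W) (hj : ∀ f ∈ V, X j * f ∈ W) :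
    finrank K V + 1 ≤ finrank K W := by
  classical
  have hex : ∃ k, ∃ f ∈ V, ¬ X i ^ (k + 1) ∣ f := by
    obtain ⟨f, hfV, hf0⟩ := Submodule.exists_mem_ne_zero_of_ne_bot hV
    obtain ⟨k, hk⟩ := FiniteMultiplicity.of_not_isUnit (X_prime (σ := σ) (R := K)).not_isUnit hf0
    exact ⟨k, f, hfV, hk⟩
  obtain ⟨f, hfV, hf⟩ := Nat.find_spec hex
  set k := Nat.find hex
  have hdvd : ∀ g ∈ V, X i ^ k ∣ g := by
    intro g hg
    rcases Nat.eq_zero_or_pos k with h0 | hpos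
    · simp [h0]
    · have := Nat.find_min hex (show k - 1 < k by omega)
      simp only [not_exists, not_and, not_not] at this
      simpa only [Nat.sub_one_add_one hpos.ne'] using this g hg
  -- `X i ^ k` divides every element of `V` but `X i ^ (k + 1)` does not divide `f`, and
  -- `X i ∤ X j`; so `X j * f` cannot be of the form `X i * g` with `g ∈ V`.
  have hnot : X j * f ∉ V.map (LinearMap.mulLeft K (X i)) := by
    rintro ⟨g, hgV, hg⟩
    obtain ⟨h, rfl⟩ := hdvd g hgV
    refine hf (X_prime.pow_dvd_of_dvd_mul_left _ (X_dvd_X.not.mpr hij) ⟨h, ?_⟩)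
    rw [← hg, LinearMap.mulLeft_apply, pow_succ]
    ring
  have hlt : V.map (LinearMap.mulLeft K (X i)) < W := by
    refine SetLike.lt_iff_le_and_exists.mpr ⟨?_, X j * f, hj f hfV, hnot⟩
    rintro _ ⟨g, hg, rfl⟩
    exact hi g hg
  have hinj : Function.Injective (LinearMap.mulLeft K (X i : MvPolynomial σ K)) :=
    mul_right_injective₀ (X_ne_zero i)
  rw [(Submodule.equivMapOfInjective _ hinj V).finrank_eq]
  exact Submodule.finrank_lt_finrank_of_lt hlt

/-- `L_t(J)`, the degree-`t` part of the ideal of initial forms of `J` at the origin. -/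
def initialForms (J : Ideal (MvPolynomial σ K)) (t : ℕ) : Submodule K (MvPolynomial σ K) :=
  ((J ⊓ idealOfVars σ K ^ t).restrictScalars K).map (homogeneousComponent t)

lemma homogeneousComponent_mem_initialForms {J : Ideal (MvPolynomial σ K)} {t : ℕ}
    {f : MvPolynomial σ K} (hfJ : f ∈ J) (hft : f ∈ idealOfVars σ K ^ t) :
    homogeneousComponent t f ∈ initialForms J t :=
  ⟨f, ⟨hfJ, hft⟩, rfl⟩

lemma initialForms_mono {J J' : Ideal (MvPolynomial σ K)} (h : J ≤ J') (t : ℕ) :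
    initialForms J t ≤ initialForms J' t :=
  Submodule.map_mono (inf_le_inf_right _ h)

lemma initialForms_le_homogeneousSubmodule (J : Ideal (MvPolynomial σ K)) (t : ℕ) :
    initialForms J t ≤ homogeneousSubmodule σ K t := by
  rintro _ ⟨f, -, rfl⟩
  exact homogeneousComponent_mem t f

instance [Finite σ] (J : Ideal (MvPolynomial σ K)) (t : ℕ) :
    FiniteDimensional K (initialForms J t) :=
  Submodule.finiteDimensional_of_le (initialForms_le_homogeneousSubmodule J t)

lemma initialForms_ne_bot {I : Ideal (MvPolynomial σ K)} {r : ℕ} (hI : I ≤ idealOfVars σ K ^ r)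
    (hI' : ¬ I ≤ idealOfVars σ K ^ (r + 1)) : initialForms I r ≠ ⊥ := by
  obtain ⟨f, hfI, hf⟩ := Set.not_subset.mp hI'
  refine (Submodule.ne_bot_iff _).mpr ⟨_, homogeneousComponent_mem_initialForms hfI (hI hfI), ?_⟩
  exact fun h0 => hf (mem_pow_idealOfVars_succ (hI hfI) h0)

lemma X_mul_mem_initialForms_mul {J : Ideal (MvPolynomial σ K)} {t : ℕ} {g : MvPolynomial σ K}
    (i : σ) (hg : g ∈ initialForms J t) : X i * g ∈ initialForms (idealOfVars σ K * J) (t + 1) := by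
  obtain ⟨f, ⟨hfJ, hft⟩, rfl⟩ := hg
  have hXi : X i ∈ idealOfVars σ K := Ideal.subset_span ⟨i, rfl⟩
  rw [← homogeneousComponent_mul_of_isHomogeneous (isHomogeneous_X K i)]
  refine homogeneousComponent_mem_initialForms (Ideal.mul_mem_mul hXi hfJ) ?_
  rw [pow_succ']
  exact Ideal.mul_mem_mul hXi hft

lemma initialForms_ne_bot_of_le [Nonempty σ] {J : Ideal (MvPolynomial σ K)} {r t : ℕ}
    (hJ : initialForms J r ≠ ⊥) (hrt : r ≤ t) : initialForms J t ≠ ⊥ := by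
  induction t, hrt using Nat.le_induction with
  | base => exact hJ
  | succ t _ ih =>
    obtain ⟨g, hg, hg0⟩ := Submodule.exists_mem_ne_zero_of_ne_bot ih
    refine (Submodule.ne_bot_iff _).mpr ⟨X (Classical.arbitrary σ) * g, ?_, ?_⟩
    · exact initialForms_mono Ideal.mul_le_right _
        (X_mul_mem_initialForms_mul _ hg)
    · exact mul_ne_zero (X_ne_zero _) hg0

lemma finrank_initialForms_add_one_le [Finite σ] [Nontrivial σ] {J : Ideal (MvPolynomial σ K)}
    {t : ℕ} (hJ : initialForms J t ≠ ⊥) :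
    finrank K (initialForms J t) + 1 ≤ finrank K (initialForms (idealOfVars σ K * J) (t + 1)) :=
  have ⟨i, j, hij⟩ := exists_pair_ne σ
  finrank_add_one_le_of_X_mul_mem hij hJ (fun _ => X_mul_mem_initialForms_mul i)
    (fun _ => X_mul_mem_initialForms_mul j)

lemma mk_mul_eq_constantCoeff_smul {I : Ideal (MvPolynomial σ K)} {x : MvPolynomial σ K}
    (hx : x ∈ I) (r : MvPolynomial σ K) :
    Ideal.Quotient.mk (idealOfVars σ K * I) (r * x) =
      constantCoeff r • Ideal.Quotient.mk (idealOfVars σ K * I) x := by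
  have hr : r - C (constantCoeff r) ∈ idealOfVars σ K := by
    rw [← pow_one (idealOfVars σ K), mem_pow_idealOfVars_iff']
    intro d hd
    obtain rfl := (Finsupp.degree_eq_zero_iff d).mp (Nat.lt_one_iff.mp hd)
    simp [constantCoeff_eq]
  rw [← Ideal.Quotient.mkₐ_eq_mk K, ← map_smul, smul_eq_C_mul, Ideal.Quotient.mkₐ_eq_mk,
    Ideal.Quotient.eq, ← sub_mul]
  exact Ideal.mul_mem_mul hr hx

/-- `V_t`: the image of `I ∩ 𝔪^t` in `I/𝔪I ⊆ R/𝔪I`; for `I ⊆ 𝔪^t` it is all of `I/𝔪I`. -/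
def fiberFiltration (I : Ideal (MvPolynomial σ K)) (t : ℕ) :
    Submodule K (MvPolynomial σ K ⧸ idealOfVars σ K * I) :=
  ((I ⊓ idealOfVars σ K ^ t).restrictScalars K).map
    (Ideal.Quotient.mkₐ K (idealOfVars σ K * I)).toLinearMap

lemma fiberFiltration_antitone (I : Ideal (MvPolynomial σ K)) : Antitone (fiberFiltration I) :=
  fun _ _ hst => Submodule.map_mono fun _ hx => ⟨hx.1, Ideal.pow_le_pow_right hst hx.2⟩

instance [Finite σ] (I : Ideal (MvPolynomial σ K)) (t : ℕ) :
    FiniteDimensional K (fiberFiltration I t) := by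
  obtain ⟨s, hs⟩ := IsNoetherian.noetherian I
  have : FiniteDimensional K (Submodule.span K (Ideal.Quotient.mk (idealOfVars σ K * I) '' s)) :=
    FiniteDimensional.span_of_finite K (s.finite_toSet.image _)
  refine Submodule.finiteDimensional_of_le (S₂ := Submodule.span K (Ideal.Quotient.mk _ '' s)) ?_
  rintro _ ⟨x, ⟨hxI, -⟩, rfl⟩
  rw [← hs] at hxI
  induction hxI using Submodule.span_induction with
  | mem x hx => exact Submodule.subset_span ⟨x, hx, rfl⟩
  | zero => simp
  | add x y _ _ hx hy => simpa using add_mem hx hy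
  | smul r x hxs hx =>
    rw [hs] at hxs
    simpa [mk_mul_eq_constantCoeff_smul hxs] using Submodule.smul_mem _ (constantCoeff r) hx

lemma exists_fiberFiltration_eq_bot [Finite σ] (I : Ideal (MvPolynomial σ K)) :
    ∃ N, fiberFiltration I N = ⊥ := by
  obtain ⟨N, hN⟩ := Ideal.exists_inf_pow_le_mul (idealOfVars σ K) I
  refine ⟨N, (Submodule.eq_bot_iff _).mpr ?_⟩
  rintro _ ⟨x, hx, rfl⟩
  exact Ideal.Quotient.eq_zero_iff_mem.mpr (hN hx)

lemma finrank_fiberFiltration_add_le [Finite σ] (I : Ideal (MvPolynomial σ K)) (t : ℕ) :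
    finrank K (fiberFiltration I t) + finrank K (initialForms (idealOfVars σ K * I) t) ≤
      finrank K (fiberFiltration I (t + 1)) + finrank K (initialForms I t) := by
  refine finrank_map_add_finrank_le ((I ⊓ idealOfVars σ K ^ t).restrictScalars K)
    (Ideal.Quotient.mkₐ K (idealOfVars σ K * I)).toLinearMap (homogeneousComponent t) rfl rfl
    (fiberFiltration_antitone I t.le_succ) (initialForms_mono Ideal.mul_le_right t) ?_
  rintro x ⟨hxI, hxt⟩ ⟨y, ⟨hyI, hyt⟩, hxy⟩
  refine ⟨x - y, ⟨sub_mem hxI (Ideal.mul_le_right hyI), ?_⟩, ?_⟩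
  · exact mem_pow_idealOfVars_succ (sub_mem hxt hyt) (by rw [map_sub, hxy, sub_self])
  · simp [Ideal.Quotient.eq_zero_iff_mem.mpr hyI]

lemma finrank_fiberFiltration_add_finrank_initialForms_le [Finite σ] [Nontrivial σ]
    {I : Ideal (MvPolynomial σ K)} {r : ℕ} (hI : initialForms I r ≠ ⊥) (j : ℕ) :
    finrank K (fiberFiltration I r) + finrank K (initialForms (idealOfVars σ K * I) r) + j ≤
      finrank K (fiberFiltration I (r + j)) +
        finrank K (initialForms (idealOfVars σ K * I) (r + j)) := by
  induction j with
  | zero => rfl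
  | succ j ih =>
    have hstep := finrank_fiberFiltration_add_le I (r + j)
    have hgrow := finrank_initialForms_add_one_le (initialForms_ne_bot_of_le hI (r.le_add_right j))
    rw [show r + (j + 1) = r + j + 1 from rfl]
    omega

end Field

section FinTwo

variable {K : Type*} [Field K]

lemma card_finsuppAntidiag_fin_two (t : ℕ) :
    #((univ : Finset (Fin 2)).finsuppAntidiag t) = t + 1 := by
  simp [card_finsuppAntidiag_nat_eq_choose, add_comm 1 t]

lemma card_biUnion_finsuppAntidiag_fin_two (r : ℕ) :
    #((range r).biUnion ((univ : Finset (Fin 2)).finsuppAntidiag ·)) = (r + 1) * r / 2 := by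
  rw [card_biUnion]
  · simp only [card_finsuppAntidiag_fin_two]
    rw [← add_zero (∑ i ∈ range r, (i + 1)), ← sum_range_succ' (fun i => i), sum_range_id,
      Nat.add_sub_cancel]
  · intro m _ n _ hmn
    exact disjoint_left.mpr fun d hm hn =>
      hmn ((mem_finsuppAntidiag.mp hm).1.symm.trans (mem_finsuppAntidiag.mp hn).1)

lemma finrank_initialForms_le_fin_two (J : Ideal (MvPolynomial (Fin 2) K)) (t : ℕ) :
    finrank K (initialForms J t) ≤ t + 1 := by
  have := Submodule.finrank_mono (initialForms_le_homogeneousSubmodule J t)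
  rwa [homogeneousSubmodule_eq_restrictSupport, finrank_restrictSupport,
    card_finsuppAntidiag_fin_two] at this

lemma finrank_fiberFiltration_le_fin_two {I : Ideal (MvPolynomial (Fin 2) K)} {r : ℕ}
    (hI : initialForms I r ≠ ⊥) : finrank K (fiberFiltration I r) ≤ r + 1 := by
  obtain ⟨N, hN⟩ := exists_fiberFiltration_eq_bot I
  have hvanish : fiberFiltration I (r + N) = ⊥ :=
    eq_bot_iff.mpr (hN ▸ fiberFiltration_antitone I (N.le_add_left r))
  have hgrow := finrank_fiberFiltration_add_finrank_initialForms_le hI N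
  rw [hvanish, finrank_bot] at hgrow
  have := finrank_initialForms_le_fin_two (idealOfVars (Fin 2) K * I) (r + N)
  omega

end FinTwo

end MvPolynomial

lemma mIdeal_eq_idealOfVars : mIdeal = idealOfVars (Fin 2) ℂ := by
  rw [mIdeal, idealOfVars]
  congr 1
  ext f
  simp [Fin.exists_fin_two, eq_comm]

lemma mu_eq_finrank_fiberFiltration {I : Ideal Rpoly} {r : ℕ}
    (hI : I ≤ idealOfVars (Fin 2) ℂ ^ r) : mu I = finrank ℂ (fiberFiltration I r) := by
  -- Rewriting `mIdeal` inside `mu` breaks its instance arguments, so generalize it instead.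
  suffices h : ∀ J, J = idealOfVars (Fin 2) ℂ →
      finrank ℂ ((I.map (Ideal.Quotient.mk (J * I))).restrictScalars ℂ) =
        finrank ℂ (fiberFiltration I r) from h mIdeal mIdeal_eq_idealOfVars
  rintro _ rfl
  have h : (I.map (Ideal.Quotient.mk (idealOfVars (Fin 2) ℂ * I))).restrictScalars ℂ =
      fiberFiltration I r := by
    ext y
    simp [fiberFiltration, inf_eq_left.mpr hI,
      Ideal.mem_map_iff_of_surjective _ Ideal.Quotient.mk_surjective]
  rw [h]

/-- If `I ⊴ ℂ[x,y]` has finite colength `n = dim_ℂ R/I` and `k = dim_ℂ I/(𝔪·I)`,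
then `n ≥ k(k-1)/2`. -/
theorem stmt0 (I : Ideal Rpoly) (n k : ℕ)
    (hfin : FiniteDimensional ℂ (Rpoly ⧸ I))
    (hn : Module.finrank ℂ (Rpoly ⧸ I) = n)
    (hk : mu I = k) :
    k * (k - 1) / 2 ≤ n := by
  subst hn hk
  rcases eq_or_ne I ⊥ with rfl | hI
  · rw [mu_eq_finrank_fiberFiltration (r := 0) bot_le, fiberFiltration, bot_inf_eq,
      Submodule.restrictScalars_bot, Submodule.map_bot, finrank_bot]
    simp
  obtain ⟨r, hIr, hIr'⟩ := exists_le_pow_idealOfVars_not_le hI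
  have hmu : mu I ≤ r + 1 := (mu_eq_finrank_fiberFiltration hIr).trans_le
    (finrank_fiberFiltration_le_fin_two (initialForms_ne_bot hIr hIr'))
  have hcolength : (r + 1) * r / 2 ≤ finrank ℂ (Rpoly ⧸ I) := by
    rw [← card_biUnion_finsuppAntidiag_fin_two, ← finrank_restrictSupport (K := ℂ)]
    refine finrank_restrictSupport_le_finrank_quotient hIr fun d hd => ?_
    simpa [Finsupp.degree_eq_sum] using hd
  calc mu I * (mu I - 1) / 2 ≤ (r + 1) * r / 2 :=
        Nat.div_le_div_right (Nat.mul_le_mul hmu (by omega))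
    _ ≤ _ := hcolength

end
end

section
/- For every ideal I of R = ℂ[x,y] with n = dim_ℂ R/I finite, there exists an ideal I' of R generated by monomials such that dim_ℂ R/I' = n and dim_ℂ I'/(𝔪·I') ≥ dim_ℂ I/(𝔪·I). In other words, the maximum of μ over ideals of colength n is attained on monomial ideals. -/
open MvPolynomial

noncomputable section

/-- An ideal of `R = ℂ[x,y]` is a monomial ideal if it is generated by a set of
monomials `x^a y^b`. -/
def IsMonomialIdeal (I : Ideal Rpoly) : Prop :=
  ∃ S : Set (ℕ × ℕ), I = Ideal.span ((fun ab : ℕ × ℕ => X 0 ^ ab.1 * X 1 ^ ab.2) '' S)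

/-! Fix a monomial order and replace `I` by its initial ideal `in(I)`, spanned by the leading
monomials of the elements of `I`. By Macaulay's theorem the monomials that are not leading form a
basis of `R ⧸ J`, so `in(I)` has colength `n` as well. Moreover `dim R/𝔪J = dim R/J + μ(J)` and
`𝔪 · in(I) ⊆ in(𝔪I)`, whence
`n + μ(I) = dim R/𝔪I = dim R/in(𝔪I) ≤ dim R/(𝔪 · in(I)) = n + μ(in(I))`. -/

namespace MonomialOrder

variable {σ k : Type*} [Field k] (m : MonomialOrder σ)

def leadingExponents (J : Ideal (MvPolynomial σ k)) : Set (σ →₀ ℕ) :=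
  {d | ∃ f ∈ J, f ≠ 0 ∧ m.degree f = d}

def initialIdeal (J : Ideal (MvPolynomial σ k)) : Ideal (MvPolynomial σ k) :=
  Ideal.span ((monomial · 1) '' m.leadingExponents J)

variable {m}

lemma degree_mem_leadingExponents {J : Ideal (MvPolynomial σ k)} {f : MvPolynomial σ k}
    (hfJ : f ∈ J) (hf : f ≠ 0) : m.degree f ∈ m.leadingExponents J :=
  ⟨f, hfJ, hf, rfl⟩

lemma leadingExponents_mono {J J' : Ideal (MvPolynomial σ k)} (h : J ≤ J') :
    m.leadingExponents J ⊆ m.leadingExponents J' :=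
  fun _ ⟨f, hfJ, hf, hd⟩ => ⟨f, h hfJ, hf, hd⟩

lemma add_mem_leadingExponents_mul {S : Set (σ →₀ ℕ)} {J : Ideal (MvPolynomial σ k)}
    {s d : σ →₀ ℕ} (hs : s ∈ S) (hd : d ∈ m.leadingExponents J) :
    s + d ∈ m.leadingExponents (Ideal.span ((monomial · (1 : k)) '' S) * J) := by
  obtain ⟨f, hfJ, hf, rfl⟩ := hd
  have hs' : monomial s (1 : k) ≠ 0 := monomial_eq_zero.not.2 one_ne_zero
  refine ⟨monomial s 1 * f, Ideal.mul_mem_mul (Ideal.subset_span ⟨s, hs, rfl⟩) hfJ,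
    mul_ne_zero hs' hf, ?_⟩
  classical
  rw [m.degree_mul hs' hf, degree_monomial, if_neg one_ne_zero]

lemma isUpperSet_leadingExponents (J : Ideal (MvPolynomial σ k)) :
    IsUpperSet (m.leadingExponents J) := by
  intro d e hde hd
  have h := add_mem_leadingExponents_mul (Set.mem_singleton (e - d)) hd
  have h' : e - d + d = e := tsub_add_cancel_of_le hde
  exact h' ▸ leadingExponents_mono Ideal.mul_le_right h

lemma leadingExponents_initialIdeal (J : Ideal (MvPolynomial σ k)) :
    m.leadingExponents (m.initialIdeal J) = m.leadingExponents J := by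
  refine subset_antisymm ?_ fun d hd => ?_
  · rintro _ ⟨f, hfJ, hf, rfl⟩
    obtain ⟨s, hs, hsd⟩ := mem_ideal_span_monomial_image.1 hfJ _ (m.degree_mem_support hf)
    exact isUpperSet_leadingExponents J hsd hs
  · have hd' : monomial d (1 : k) ≠ 0 := monomial_eq_zero.not.2 one_ne_zero
    classical
    have h := degree_mem_leadingExponents (m := m)
      (Ideal.subset_span (Set.mem_image_of_mem (monomial · (1 : k)) hd)) hd'
    rwa [degree_monomial, if_neg one_ne_zero] at h

lemma mul_initialIdeal_le (S : Set (σ →₀ ℕ)) (J : Ideal (MvPolynomial σ k)) :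
    Ideal.span ((monomial · (1 : k)) '' S) * m.initialIdeal J ≤
      m.initialIdeal (Ideal.span ((monomial · 1) '' S) * J) := by
  rw [initialIdeal, Ideal.span_mul_span', Ideal.span_le]
  rintro _ ⟨_, ⟨s, hs, rfl⟩, _, ⟨d, hd, rfl⟩, rfl⟩
  simp only [monomial_mul, one_mul]
  exact Ideal.subset_span ⟨_, add_mem_leadingExponents_mul hs hd, rfl⟩

variable (m)

lemma isCompl_restrictScalars_restrictSupport (J : Ideal (MvPolynomial σ k)) :
    IsCompl (J.restrictScalars k) (restrictSupport k (m.leadingExponents J)ᶜ) := by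
  constructor
  · rw [Submodule.disjoint_def]
    intro f hfJ hf
    by_contra hf0
    exact hf (m.degree_mem_support hf0) (degree_mem_leadingExponents hfJ hf0)
  · rw [codisjoint_iff, Submodule.eq_top_iff']
    intro f
    obtain ⟨g, r, hf, -, hr⟩ := m.div_set (B := {b | b ∈ J ∧ b ≠ 0})
      (fun b hb => m.isUnit_leadingCoeff.2 hb.2) f
    refine Submodule.mem_sup.2 ⟨_, ?_, r, ?_, hf.symm⟩
    · rw [Finsupp.linearCombination_apply]
      exact Submodule.sum_mem _ fun b _ => J.smul_mem _ b.2.1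
    · rw [mem_restrictSupport_iff]
      rintro c hc ⟨b, hbJ, hb0, rfl⟩
      exact hr _ hc b ⟨hbJ, hb0⟩ le_rfl

def standardMonomialBasis (J : Ideal (MvPolynomial σ k)) :
    Module.Basis ((m.leadingExponents J)ᶜ : Set (σ →₀ ℕ)) k (MvPolynomial σ k ⧸ J) :=
  (basisRestrictSupport k _).map
    ((Submodule.quotientEquivOfIsCompl _ _ (isCompl_restrictScalars_restrictSupport m J)).symm ≪≫ₗ
      Submodule.Quotient.restrictScalarsEquiv k J)

lemma finrank_quotient_eq_ncard (J : Ideal (MvPolynomial σ k)) :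
    Module.finrank k (MvPolynomial σ k ⧸ J) = (m.leadingExponents J)ᶜ.ncard := by
  rw [Module.finrank_eq_nat_card_basis (standardMonomialBasis m J), Nat.card_coe_set_eq]

lemma finiteDimensional_quotient_iff (J : Ideal (MvPolynomial σ k)) :
    FiniteDimensional k (MvPolynomial σ k ⧸ J) ↔ (m.leadingExponents J)ᶜ.Finite := by
  refine ⟨fun _ => Set.finite_coe_iff.1 (Module.Finite.finite_basis (standardMonomialBasis m J)),
    fun h => ?_⟩
  have := h.to_subtype
  exact Module.Finite.of_basis (standardMonomialBasis m J)

variable {m}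

lemma finrank_quotient_initialIdeal (J : Ideal (MvPolynomial σ k)) :
    Module.finrank k (MvPolynomial σ k ⧸ m.initialIdeal J) =
      Module.finrank k (MvPolynomial σ k ⧸ J) := by
  rw [finrank_quotient_eq_ncard m, finrank_quotient_eq_ncard m, leadingExponents_initialIdeal]

lemma finite_compl_leadingExponents_mul [Finite σ] {S : Set (σ →₀ ℕ)}
    (hS : ∀ i, Finsupp.single i 1 ∈ S) {J : Ideal (MvPolynomial σ k)}
    (hJ : (m.leadingExponents J)ᶜ.Finite) :
    (m.leadingExponents (Ideal.span ((monomial · (1 : k)) '' S) * J))ᶜ.Finite := by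
  refine ((Set.finite_iUnion fun i => hJ.image (· + Finsupp.single i 1)).insert 0).subset ?_
  intro d hd
  by_cases hd0 : d = 0
  · exact Or.inl hd0
  obtain ⟨i, hi⟩ : ∃ i, d i ≠ 0 := by
    by_contra! h
    exact hd0 (Finsupp.ext h)
  have hle : Finsupp.single i 1 ≤ d := Finsupp.single_le_iff.2 (Nat.one_le_iff_ne_zero.2 hi)
  refine Or.inr (Set.mem_iUnion.2 ⟨i, d - Finsupp.single i 1, fun hmem => hd ?_,
    tsub_add_cancel_of_le hle⟩)
  simpa [add_tsub_cancel_of_le hle] using add_mem_leadingExponents_mul (hS i) hmem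

lemma finrank_quotient_mul_le_mul_initialIdeal [Finite σ] {S : Set (σ →₀ ℕ)}
    (hS : ∀ i, Finsupp.single i 1 ∈ S) {J : Ideal (MvPolynomial σ k)}
    (hJ : (m.leadingExponents J)ᶜ.Finite) :
    Module.finrank k (MvPolynomial σ k ⧸ Ideal.span ((monomial · (1 : k)) '' S) * J) ≤
      Module.finrank k
        (MvPolynomial σ k ⧸ Ideal.span ((monomial · (1 : k)) '' S) * m.initialIdeal J) := by
  rw [finrank_quotient_eq_ncard m, finrank_quotient_eq_ncard m]
  refine Set.ncard_le_ncard (Set.compl_subset_compl.2 ?_)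
    (finite_compl_leadingExponents_mul hS (by rwa [leadingExponents_initialIdeal]))
  have h := leadingExponents_mono (m := m) (mul_initialIdeal_le (m := m) S J)
  rwa [leadingExponents_initialIdeal] at h

end MonomialOrder

lemma Ideal.finrank_quotient_eq_add_finrank_map {k A : Type*} [Field k] [CommRing A]
    [Algebra k A] {J' J : Ideal A} (h : J' ≤ J) [FiniteDimensional k (A ⧸ J')] :
    Module.finrank k (A ⧸ J') = Module.finrank k (A ⧸ J) +
      Module.finrank k ((J.map (Ideal.Quotient.mk J')).restrictScalars k) := by
  have e := (DoubleQuot.quotQuotEquivQuotOfLEₐ k h).toLinearEquiv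
  rw [← (Submodule.Quotient.restrictScalarsEquiv k _).finrank_eq.trans e.finrank_eq]
  exact (Submodule.finrank_quotient_add_finrank _).symm

open MonomialOrder

lemma mIdeal_eq_span_monomial :
    mIdeal = Ideal.span ((monomial · (1 : ℂ)) '' Set.range (Finsupp.single · 1)) := by
  rw [mIdeal, ← Set.range_comp]
  congr
  ext p
  simp [Fin.exists_fin_two, eq_comm, X]

lemma isMonomialIdeal_initialIdeal (m : MonomialOrder (Fin 2)) (J : Ideal Rpoly) :
    IsMonomialIdeal (m.initialIdeal J) := by
  refine ⟨(fun d => (d 0, d 1)) '' m.leadingExponents J, ?_⟩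
  rw [initialIdeal, Set.image_image]
  congr! 2 with d
  simp [monomial_eq, Finsupp.prod_fintype, Fin.prod_univ_two]

lemma finrank_quotient_mIdeal_mul (J : Ideal Rpoly) [FiniteDimensional ℂ (Rpoly ⧸ J)] :
    Module.finrank ℂ (Rpoly ⧸ mIdeal * J) = Module.finrank ℂ (Rpoly ⧸ J) + mu J := by
  have : FiniteDimensional ℂ (Rpoly ⧸ mIdeal * J) := by
    rw [finiteDimensional_quotient_iff MonomialOrder.lex, mIdeal_eq_span_monomial]
    exact finite_compl_leadingExponents_mul (Set.mem_range_self ·)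
      ((finiteDimensional_quotient_iff _ J).1 ‹_›)
  exact Ideal.finrank_quotient_eq_add_finrank_map Ideal.mul_le_right

/-- For every ideal `I` of `ℂ[x,y]` of finite colength `n` there is a monomial ideal
`I'` of colength `n` with `μ(I') ≥ μ(I)`: the maximum of `μ` in colength `n` is
attained on monomial ideals. -/
theorem stmt5 (I : Ideal Rpoly) (n : ℕ)
    (hfin : FiniteDimensional ℂ (Rpoly ⧸ I))
    (hn : Module.finrank ℂ (Rpoly ⧸ I) = n) :
    ∃ I' : Ideal Rpoly, IsMonomialIdeal I' ∧
      Module.finrank ℂ (Rpoly ⧸ I') = n ∧ mu I ≤ mu I' := by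
  let m : MonomialOrder (Fin 2) := MonomialOrder.lex
  have hI : (m.leadingExponents I)ᶜ.Finite := (finiteDimensional_quotient_iff m I).1 hfin
  have : FiniteDimensional ℂ (Rpoly ⧸ m.initialIdeal I) := by
    rwa [finiteDimensional_quotient_iff m, leadingExponents_initialIdeal]
  have hcolength : Module.finrank ℂ (Rpoly ⧸ m.initialIdeal I) = n :=
    (finrank_quotient_initialIdeal I).trans hn
  refine ⟨m.initialIdeal I, isMonomialIdeal_initialIdeal m I, hcolength, ?_⟩
  have hmul := finrank_quotient_mIdeal_mul I
  have hmulInitial := finrank_quotient_mIdeal_mul (m.initialIdeal I)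
  rw [hn] at hmul
  rw [hcolength] at hmulInitial
  have hle : Module.finrank ℂ (Rpoly ⧸ mIdeal * I) ≤
      Module.finrank ℂ (Rpoly ⧸ mIdeal * m.initialIdeal I) := by
    rw [mIdeal_eq_span_monomial]
    exact finrank_quotient_mul_le_mul_initialIdeal (Set.mem_range_self ·) hI
  omega
end
end

section
/- For natural numbers i ≤ j, the following orthogonality relation holds in the field K = ℚ(t): ∑_{k=i}^{j} (−1)^{k−i} · t^{(k−i)(k−i−1)/2} · [j choose k]_t · [k choose i]_t equals 1 if i = j and equals 0 if i < j. Equivalently, the (lower-triangular-to-upper) matrix ([j choose i]_t)_{i,j} has inverse ((−1)^{j−i} t^{binom(j−i,2)} [j choose i]_t)_{i,j}. -/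
/-!
Writing `[m choose a]_t` through `t`-factorials gives the subset-of-a-subset identity
`[j choose k]_t [k choose i]_t = [j choose i]_t [j-i choose k-i]_t`, which pulls `[j choose i]_t` out
of the sum and leaves `∑_p (-1)^p t^{binom(p,2)} [n choose p]_t` with `n = j - i`. By the
`t`-binomial theorem `∏_{l<n} (1 + x t^l) = ∑_p t^{binom(p,2)} [n choose p]_t x^p` at `x = -1`, this
is `∏_{l<n} (1 - t^l)`, which vanishes for `n > 0` because of its factor `1 - t^0`.
-/

open Finset Polynomial

noncomputable section

/-- The field `K = ℚ(t)` of rational functions. -/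
abbrev K : Type := RatFunc ℚ

/-- The indeterminate `t` of `K = ℚ(t)`. -/
noncomputable def t : K := RatFunc.X

/-- The Gaussian binomial coefficient `[m choose a]_t ∈ ℚ(t)`:
`∏_{i=0}^{a-1} (1 - t^{m-i})/(1 - t^{i+1})` if `a ≤ m`, and `0` if `a > m`. -/
noncomputable def gb (m a : ℕ) : K :=
  if a ≤ m then ∏ i ∈ Finset.range a, (1 - t ^ (m - i)) / (1 - t ^ (i + 1)) else 0

lemma one_sub_t_pow_ne_zero {n : ℕ} (hn : n ≠ 0) : (1 : K) - t ^ n ≠ 0 := by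
  have h : t ^ n - 1 = algebraMap ℚ[X] K (X ^ n - C 1) := by simp [t, RatFunc.algebraMap_X]
  rw [← neg_sub, neg_ne_zero, h]
  exact RatFunc.algebraMap_ne_zero (X_pow_sub_C_ne_zero (Nat.pos_of_ne_zero hn) 1)

/-- The `t`-factorial `[n]_t! (1 - t)^n`. -/
def qfac (n : ℕ) : K := ∏ i ∈ range n, (1 - t ^ (i + 1))

lemma qfac_ne_zero (n : ℕ) : qfac n ≠ 0 :=
  prod_ne_zero_iff.2 fun i _ => one_sub_t_pow_ne_zero i.succ_ne_zero

lemma qfac_zero : qfac 0 = 1 :=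
  prod_range_zero _

lemma qfac_succ (n : ℕ) : qfac (n + 1) = qfac n * (1 - t ^ (n + 1)) :=
  prod_range_succ _ n

lemma qfac_mul_prod_range (a b : ℕ) :
    qfac b * ∏ i ∈ range a, (1 - t ^ (a + b - i)) = qfac (a + b) := by
  have hreflect : ∏ i ∈ range a, (1 - t ^ (a + b - i)) = ∏ i ∈ Ico b (a + b), (1 - t ^ (i + 1)) := by
    rw [← prod_range_reflect, prod_Ico_eq_prod_range, Nat.add_sub_cancel]
    refine prod_congr rfl fun i hi => ?_
    rw [mem_range] at hi
    congr 2
    omega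
  rw [hreflect, qfac, qfac, prod_range_mul_prod_Ico _ (Nat.le_add_left b a)]

lemma gb_add_left (a b : ℕ) : gb (a + b) a = qfac (a + b) / (qfac a * qfac b) := by
  rw [gb, if_pos (Nat.le_add_right a b), prod_div_distrib, ← qfac_mul_prod_range a b]
  change _ / qfac a = _
  field_simp [qfac_ne_zero]

lemma gb_zero (m : ℕ) : gb m 0 = 1 := by
  simp [gb]

lemma gb_self (m : ℕ) : gb m m = 1 := by
  rw [← div_self (qfac_ne_zero m)]
  simpa [qfac_zero] using gb_add_left m 0

lemma gb_of_lt {m a : ℕ} (h : m < a) : gb m a = 0 :=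
  if_neg h.not_ge

lemma gb_succ_succ {n k : ℕ} (hk : k ≤ n) :
    gb (n + 1) (k + 1) = gb n (k + 1) + t ^ (n - k) * gb n k := by
  obtain ⟨b, rfl⟩ := Nat.exists_eq_add_of_le hk
  rw [Nat.add_sub_cancel_left]
  rcases b with _ | c
  · simp [gb_self, gb_of_lt (Nat.lt_succ_self k)]
  · have h₁ := gb_add_left (k + 1) (c + 1)
    have h₂ := gb_add_left (k + 1) c
    have h₃ := gb_add_left k (c + 1)
    rw [show k + 1 + (c + 1) = k + c + 1 + 1 by ring, qfac_succ (k + c + 1)] at h₁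
    rw [show k + 1 + c = k + c + 1 by ring] at h₂
    rw [show k + (c + 1) = k + c + 1 by ring] at h₃
    rw [show k + (c + 1) = k + c + 1 by ring, h₁, h₂, h₃, qfac_succ k, qfac_succ c]
    have := one_sub_t_pow_ne_zero k.succ_ne_zero
    have := one_sub_t_pow_ne_zero c.succ_ne_zero
    field_simp [qfac_ne_zero]
    ring

lemma gb_mul_gb {i k j : ℕ} (hik : i ≤ k) (hkj : k ≤ j) :
    gb j k * gb k i = gb j i * gb (j - i) (k - i) := by
  obtain ⟨p, rfl⟩ := Nat.exists_eq_add_of_le hik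
  obtain ⟨q, rfl⟩ := Nat.exists_eq_add_of_le hkj
  rw [gb_add_left (i + p) q, gb_add_left i p, Nat.add_sub_cancel_left, add_assoc,
    Nat.add_sub_cancel_left, gb_add_left i (p + q), gb_add_left p q]
  field_simp [qfac_ne_zero]

theorem prod_one_add_mul_t_pow (x : K) (n : ℕ) :
    ∏ l ∈ range n, (1 + x * t ^ l) = ∑ p ∈ range (n + 1), t ^ (p * (p - 1) / 2) * gb n p * x ^ p := by
  induction n with
  | zero => simp [gb_zero]
  | succ n ih =>
    have hpascal : ∀ p ∈ range (n + 1),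
        t ^ ((p + 1) * (p + 1 - 1) / 2) * gb (n + 1) (p + 1) * x ^ (p + 1)
          = t ^ ((p + 1) * (p + 1 - 1) / 2) * gb n (p + 1) * x ^ (p + 1)
            + x * t ^ n * (t ^ (p * (p - 1) / 2) * gb n p * x ^ p) := by
      intro p hp
      have hpn := mem_range_succ_iff.1 hp
      have hexp : t ^ ((p + 1) * (p + 1 - 1) / 2) * t ^ (n - p) = t ^ (p * (p - 1) / 2) * t ^ n := by
        rw [← pow_add, ← pow_add, Nat.triangle_succ]
        congr 1
        omega
      rw [gb_succ_succ hpn]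
      linear_combination (gb n p * x ^ (p + 1)) * hexp
    have hshift := sum_range_succ' (fun p => t ^ (p * (p - 1) / 2) * gb n p * x ^ p) (n + 1)
    have hlast := sum_range_succ (fun p => t ^ (p * (p - 1) / 2) * gb n p * x ^ p) (n + 1)
    simp only [gb_zero, zero_mul, Nat.zero_div, pow_zero, mul_one] at hshift
    rw [gb_of_lt (Nat.lt_succ_self n), mul_zero, zero_mul, add_zero] at hlast
    rw [prod_range_succ, ih, sum_range_succ' _ (n + 1), sum_congr rfl hpascal, sum_add_distrib,
      ← mul_sum, gb_zero]
    simp only [zero_mul, Nat.zero_div, pow_zero, mul_one]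
    linear_combination hshift - hlast

lemma sum_neg_one_pow_mul_gb (n : ℕ) :
    ∑ p ∈ range (n + 1), (-1 : K) ^ p * t ^ (p * (p - 1) / 2) * gb n p = if n = 0 then 1 else 0 :=
  calc ∑ p ∈ range (n + 1), (-1 : K) ^ p * t ^ (p * (p - 1) / 2) * gb n p
      = ∑ p ∈ range (n + 1), t ^ (p * (p - 1) / 2) * gb n p * (-1) ^ p :=
        sum_congr rfl fun p _ => by ring
    _ = ∏ l ∈ range n, (1 + -1 * t ^ l) := (prod_one_add_mul_t_pow (-1) n).symm
    _ = if n = 0 then 1 else 0 := by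
      rcases n with _ | n
      · simp
      · rw [if_neg n.succ_ne_zero]
        exact prod_eq_zero (mem_range.2 n.succ_pos) (by simp)

/-- Orthogonality of Gaussian binomial coefficients: for `i ≤ j`,
`∑_{k=i}^{j} (-1)^{k-i} t^{binom(k-i,2)} [j choose k]_t [k choose i]_t = δ_{ij}`. -/
theorem stmt7 (i j : ℕ) (h : i ≤ j) :
    ∑ k ∈ Finset.Icc i j,
        (-1 : K) ^ (k - i) * t ^ ((k - i) * (k - i - 1) / 2) * gb j k * gb k i
      = if i = j then 1 else 0 := by
  have hfactor : ∀ k ∈ Icc i j,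
      (-1 : K) ^ (k - i) * t ^ ((k - i) * (k - i - 1) / 2) * gb j k * gb k i
        = gb j i * ((-1) ^ (k - i) * t ^ ((k - i) * (k - i - 1) / 2) * gb (j - i) (k - i)) := by
    intro k hk
    rw [mem_Icc] at hk
    rw [mul_assoc, gb_mul_gb hk.1 hk.2]
    ring
  rw [sum_congr rfl hfactor, ← mul_sum, ← Ico_add_one_right_eq_Icc, sum_Ico_eq_sum_range]
  simp only [Nat.add_sub_cancel_left]
  rw [show j + 1 - i = j - i + 1 by omega, sum_neg_one_pow_mul_gb]
  rcases h.eq_or_lt with rfl | hlt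
  · simp [gb_self]
  · rw [if_neg (by omega), if_neg hlt.ne, mul_zero]

end
end

section
/- Let a_n ∈ ℚ(t) (n ≥ 0) be the coefficients of the formal power series ∏_{d=1}^{∞} (1 − t^{d−1} q^d) · (1 − t^{d+1} q^d)^{−1} = ∑_{n=0}^{∞} a_n q^n in ℚ(t)[[q]], and let ι : ℚ(t) → ℚ(t) be the field homomorphism determined by ι(t) = t^{−1}. Then ∑_{n=0}^{∞} t^{2n} · ι(a_n) · q^n = ∏_{d=1}^{∞} (1 − t^{d+1} q^d) · (1 − t^{d−1} q^d)^{−1}. -/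
noncomputable section

/-- `K` is given the discrete topology. -/
instance : TopologicalSpace K := ⊥

/-- `K[[q]]` is given the topology of coefficientwise convergence, under which the
infinite products below converge. -/
instance : TopologicalSpace (PowerSeries K) :=
  TopologicalSpace.induced (fun f n => PowerSeries.coeff (R := K) n f) Pi.topologicalSpace

/-
The substitution `aₙ ↦ t^{2n} ι(aₙ)` is the ring endomorphism `twist ι (t²) = rescale (t²) ∘ map ι`
of `ℚ(t)[[q]]`. It sends the factor `1 - t^j q^m` to `1 - t^{2m-j} q^m`, so it exchanges the two
kinds of factors of the product. Since `ι` is an involution and `ι(t²) t² = 1`, it is a continuous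
involution, hence commutes with infinite products (convergent or not), and as a ring map it
commutes with inverses of series with nonzero constant term.
-/

open PowerSeries

lemma RatFunc.ringHom_ext_X {L : Type*} [Semiring L] {f g : RatFunc ℚ →+* L}
    (h : f RatFunc.X = g RatFunc.X) : f = g := by
  refine IsLocalization.ringHom_ext (nonZeroDivisors (Polynomial ℚ))
    (Polynomial.ringHom_ext (fun a => ?_) (by simpa using h))
  exact RingHom.congr_fun (RingHom.ext_rat ((f.comp (algebraMap _ _)).comp Polynomial.C)
    ((g.comp (algebraMap _ _)).comp Polynomial.C)) a

lemma PowerSeries.map_inv_of_constantCoeff_ne_zero {k l : Type*} [Field k] [Field l]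
    (f : k⟦X⟧ →+* l⟦X⟧) {v : k⟦X⟧} (hv : constantCoeff v ≠ 0) : f v⁻¹ = (f v)⁻¹ := by
  have hunit : f v * f v⁻¹ = 1 := by rw [← map_mul, PowerSeries.mul_inv_cancel v hv, map_one]
  have hfv : constantCoeff (f v) ≠ 0 :=
    left_ne_zero_of_mul_eq_one (by rw [← map_mul, hunit, map_one])
  rw [eq_inv_iff_mul_eq_one hfv, mul_comm, hunit]

namespace PowerSeries

variable {R : Type*} [CommRing R]

def twist (σ : R →+* R) (c : R) : R⟦X⟧ →+* R⟦X⟧ := (rescale c).comp (map σ)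

variable (σ : R →+* R) (c : R)

@[simp]
lemma coeff_twist (n : ℕ) (f : R⟦X⟧) : coeff n (twist σ c f) = c ^ n * σ (coeff n f) := by
  simp [twist, coeff_rescale, coeff_map]

lemma twist_C (b : R) : twist σ c (C b) = C (σ b) := by
  ext n
  rcases n with _ | n <;> simp [coeff_C]

lemma twist_X : twist σ c X = C c * X := by
  simp [twist, map_X, rescale_X]

lemma twist_one_sub_C_mul_X_pow (b : R) (m : ℕ) :
    twist σ c (1 - C b * X ^ m) = 1 - C (σ b * c ^ m) * X ^ m := by
  rw [map_sub, map_one, map_mul, map_pow, twist_C, twist_X, mul_pow, ← map_pow, ← mul_assoc,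
    ← map_mul]

variable {σ c} in
lemma twist_twist (hσ : Function.Involutive σ) (hc : σ c * c = 1) (f : R⟦X⟧) :
    twist σ c (twist σ c f) = f := by
  ext n
  rw [coeff_twist, coeff_twist, map_mul, map_pow, hσ, ← mul_assoc, ← mul_pow, mul_comm c, hc,
    one_pow, one_mul]

end PowerSeries

instance : DiscreteTopology K := ⟨rfl⟩

lemma isEmbedding_coeff : Topology.IsEmbedding fun (f : K⟦X⟧) n => coeff n f :=
  ⟨⟨rfl⟩, fun _ _ h => PowerSeries.ext (congrFun h)⟩

instance : T2Space K⟦X⟧ := isEmbedding_coeff.t2Space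

lemma continuous_twist (σ : K →+* K) (c : K) : Continuous (twist σ c) := by
  refine continuous_induced_rng.2 (continuous_pi fun n => ?_)
  show Continuous fun f => coeff n (twist σ c f)
  simp only [coeff_twist]
  exact (continuous_of_discreteTopology (f := fun x : K => c ^ n * σ x)).comp
    ((continuous_apply n).comp isEmbedding_coeff.continuous)

section Dual

variable {ι : K →+* K} (hι : ι t = t⁻¹)
include hι

lemma involutive_of_map_t_eq_inv : Function.Involutive ι :=
  RingHom.congr_fun (RatFunc.ringHom_ext_X (f := ι.comp ι) (g := RingHom.id K)
    (show ι (ι t) = t by rw [hι, map_inv₀, hι, inv_inv]))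

lemma map_t_pow_mul_t_sq_pow {j k m : ℕ} (h : j + k = 2 * m) : ι (t ^ j) * (t ^ 2) ^ m = t ^ k := by
  rw [map_pow, hι, inv_pow, inv_mul_eq_iff_eq_mul₀ (pow_ne_zero _ RatFunc.X_ne_zero), ← pow_mul,
    ← pow_add, h]

lemma twist_one_sub_t_pow_mul_X_pow {j k m : ℕ} (h : j + k = 2 * m) :
    twist ι (t ^ 2) (1 - C (t ^ j) * X ^ m) = 1 - C (t ^ k) * X ^ m := by
  rw [twist_one_sub_C_mul_X_pow, map_t_pow_mul_t_sq_pow hι h]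

lemma twist_tprod (f : ℕ → K⟦X⟧) :
    twist ι (t ^ 2) (∏' d, f d) = ∏' d, twist ι (t ^ 2) (f d) := by
  have hc : ι (t ^ 2) * t ^ 2 = 1 := by
    simpa using map_t_pow_mul_t_sq_pow hι (j := 2) (k := 0) (m := 1) rfl
  exact Function.LeftInverse.map_tprod f (continuous_twist ι _) (continuous_twist ι _)
    (twist_twist (involutive_of_map_t_eq_inv hι) hc)

end Dual

open PowerSeries in
/-- If `∑_n aₙ qⁿ = ∏_{d=1}^∞ (1 - t^{d-1} q^d)(1 - t^{d+1} q^d)⁻¹` (the generating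
function of the E-polynomials of the Hilbert schemes of points on `ℂ² ∖ {0}`), and
`ι : ℚ(t) → ℚ(t)` is the field homomorphism with `ι(t) = t⁻¹`, then
`∑_n t^{2n} ι(aₙ) qⁿ = ∏_{d=1}^∞ (1 - t^{d+1} q^d)(1 - t^{d-1} q^d)⁻¹`. -/
theorem stmt10 (ι : K →+* K) (hι : ι t = t⁻¹) (a : ℕ → K)
    (ha : PowerSeries.mk a =
      ∏' d : ℕ, (1 - C (t ^ d) * X ^ (d + 1)) * (1 - C (t ^ (d + 2)) * X ^ (d + 1))⁻¹) :
    PowerSeries.mk (fun n => t ^ (2 * n) * ι (a n)) =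
      ∏' d : ℕ, (1 - C (t ^ (d + 2)) * X ^ (d + 1)) * (1 - C (t ^ d) * X ^ (d + 1))⁻¹ := by
  have hmk : mk (fun n => t ^ (2 * n) * ι (a n)) = twist ι (t ^ 2) (mk a) := by
    ext n
    simp [pow_mul]
  rw [hmk, ha, twist_tprod hι]
  refine tprod_congr fun d => ?_
  rw [map_mul, map_inv_of_constantCoeff_ne_zero _ (by simp),
    twist_one_sub_t_pow_mul_X_pow hι (k := d + 2) (by ring),
    twist_one_sub_t_pow_mul_X_pow hι (k := d) (by ring)]
end
end

section
/- For every m ≥ 1, the following identity holds in ℚ[[q]]: ∑_{n=0}^{∞} c_m(n) q^n = ∏_{d=1}^{∞} (1 − q^d)^{−1} · ∑_{k=0}^{∞} (−1)^{k−m} · q^{k(k−1)/2} · binom(k, m) · ∏_{d=1}^{k} (1 − q^d)^{−1}, where c_m(n) is the number of partitions of n having exactly m−1 distinct part sizes (the empty partition of 0 has 0 distinct part sizes), and binom(k,m) is the ordinary binomial coefficient. -/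
/-!
The series `q^(k(k-1)/2) / ∏_{d ≤ k} (1 - q^d)` counts `k`-element subsets of `ℕ` by their sum,
and `1 / ∏_d (1 - q^d)` counts partitions. A pair (partition `μ`, `k`-subset `B`) corresponds to
the partition `ν = μ + (B \ {0})` together with `B`, now a `k`-subset of `{0} ∪ parts ν`; so the
`k`-th term of the sum, multiplied by `1 / ∏_d (1 - q^d)`, is `∑_ν binom(D ν + 1, k) q^|ν|`, where
`D ν` is the number of distinct part sizes. Binomial inversion,
`∑_k (-1)^(k-m) binom(k, m) binom(D + 1, k) = [D + 1 = m]`, then leaves exactly the partitions with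
`D ν = m - 1`.
-/

noncomputable section

/-- `ℚ[[q]]` is given the topology of coefficientwise convergence, under which the
infinite product and sum below converge. -/
instance : TopologicalSpace (PowerSeries ℚ) :=
  TopologicalSpace.induced (fun f n => PowerSeries.coeff (R := ℚ) n f) Pi.topologicalSpace

open Finset PowerSeries

def subsetsWithSum (k b : ℕ) : Finset (Finset ℕ) :=
  {A ∈ (range (b + 1)).powersetCard k | ∑ x ∈ A, x = b}

theorem subset_range_sum_succ (A : Finset ℕ) : A ⊆ range (∑ x ∈ A, x + 1) := fun _ hx =>
  mem_range_succ_iff.2 (single_le_sum (f := id) (fun _ _ => Nat.zero_le _) hx)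

theorem mem_subsetsWithSum {k b : ℕ} {A : Finset ℕ} :
    A ∈ subsetsWithSum k b ↔ #A = k ∧ ∑ x ∈ A, x = b := by
  simp only [subsetsWithSum, mem_filter, mem_powersetCard]
  exact ⟨fun h => ⟨h.1.2, h.2⟩, fun ⟨hk, hb⟩ => ⟨⟨hb ▸ subset_range_sum_succ A, hk⟩, hb⟩⟩

theorem card_le_sum_of_zero_notMem {A : Finset ℕ} (h : 0 ∉ A) : #A ≤ ∑ x ∈ A, x := by
  simpa using card_nsmul_le_sum A id 1 fun x hx =>
    Nat.one_le_iff_ne_zero.2 (ne_of_mem_of_not_mem hx h)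

theorem map_succ_image_pred {A : Finset ℕ} (h : 0 ∉ A) :
    (A.image (· - 1)).map (addRightEmbedding 1) = A := by
  rw [map_eq_image, image_image]
  refine (image_congr fun x hx => ?_).trans image_id'
  exact Nat.sub_add_cancel (Nat.one_le_iff_ne_zero.2 (ne_of_mem_of_not_mem hx h))

theorem card_filter_zero_mem_subsetsWithSum (k b : ℕ) :
    #{B ∈ subsetsWithSum (k + 1) b | 0 ∈ B} = #{B ∈ subsetsWithSum k b | 0 ∉ B} := by
  refine card_nbij' (·.erase 0) (insert 0) ?_ ?_ ?_ ?_ <;> intro B hB <;>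
    simp only [coe_filter, Set.mem_ofPred_eq, mem_subsetsWithSum] at hB ⊢
  · simp [card_erase_of_mem hB.2, sum_erase, hB.1]
  · simp [card_insert_of_notMem hB.2, sum_insert hB.2, hB.1]
  · exact insert_erase hB.2
  · exact erase_insert hB.2

theorem card_filter_zero_notMem_subsetsWithSum (k b : ℕ) :
    #{B ∈ subsetsWithSum k b | 0 ∉ B} = if k ≤ b then #(subsetsWithSum k (b - k)) else 0 := by
  split_ifs with hkb
  · obtain ⟨c, rfl⟩ := Nat.exists_eq_add_of_le' hkb
    rw [Nat.add_sub_cancel, eq_comm]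
    refine card_nbij' (·.map (addRightEmbedding 1)) (·.image (· - 1)) ?_ ?_ ?_ ?_ <;>
      intro B hB <;> simp only [coe_filter, Set.mem_ofPred_eq, mem_coe, mem_subsetsWithSum] at hB ⊢
    · simp [sum_add_distrib, hB.1, hB.2]
    · rw [← map_succ_image_pred hB.2] at hB
      simp [sum_add_distrib] at hB
      omega
    · simp [map_eq_image, image_image, Function.comp_def]
    · exact map_succ_image_pred hB.2
  · rw [card_eq_zero, filter_eq_empty_iff]
    intro B hB h0
    have := card_le_sum_of_zero_notMem h0
    rw [mem_subsetsWithSum] at hB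
    omega

theorem card_subsetsWithSum_succ (k b : ℕ) :
    #(subsetsWithSum (k + 1) b) =
      (if k ≤ b then #(subsetsWithSum k (b - k)) else 0) +
        if k + 1 ≤ b then #(subsetsWithSum (k + 1) (b - (k + 1))) else 0 := by
  rw [← card_filter_add_card_filter_not (0 ∈ ·), card_filter_zero_mem_subsetsWithSum,
    card_filter_zero_notMem_subsetsWithSum, card_filter_zero_notMem_subsetsWithSum]

theorem card_subsetsWithSum_zero (b : ℕ) : #(subsetsWithSum 0 b) = if b = 0 then 1 else 0 := by
  by_cases hb : b = 0 <;> simp [subsetsWithSum, hb, filter_singleton, eq_comm]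

theorem sum_card_subsetsWithSum_smul {M : Type*} [AddCommMonoid M] (n k : ℕ) (f : ℕ → M) :
    ∑ b ∈ range (n + 1), #(subsetsWithSum k b) • f (n - b) =
      ∑ B ∈ (range (n + 1)).powersetCard k, if ∑ x ∈ B, x ≤ n then f (n - ∑ x ∈ B, x) else 0 := by
  rw [← sum_filter, ← sum_fiberwise_of_maps_to' (t := range (n + 1))
    (g := fun B => ∑ x ∈ B, x) (f := fun b => f (n - b))
    (fun B hB => mem_range_succ_iff.2 (mem_filter.1 hB).2)]
  refine sum_congr rfl fun b hb => ?_
  rw [sum_const]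
  congr 2
  ext B
  simp only [mem_filter, mem_subsetsWithSum, mem_powersetCard]
  constructor
  · rintro ⟨hk, rfl⟩
    have hb := mem_range_succ_iff.1 hb
    exact ⟨⟨⟨(subset_range_sum_succ B).trans (range_subset_range.2 (by omega)), hk⟩, hb⟩, rfl⟩
  · rintro ⟨⟨⟨-, hk⟩, -⟩, hs⟩
    exact ⟨hk, hs⟩

namespace Nat.Partition

theorem card_parts_toFinset_le {n : ℕ} (p : n.Partition) : #p.parts.toFinset ≤ n := by
  calc #p.parts.toFinset ≤ Multiset.card p.parts := Multiset.toFinset_card_le _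
    _ ≤ p.parts.sum := by simpa using Multiset.card_nsmul_le_sum fun _ hx => p.parts_pos hx
    _ = n := p.parts_sum

theorem val_le_parts_of_subset {n : ℕ} {p : n.Partition} {S : Finset ℕ}
    (h : S ⊆ p.parts.toFinset) : S.val ≤ p.parts :=
  (Multiset.le_iff_subset S.nodup).2 fun _ hx => Multiset.mem_toFinset.1 (h hx)

theorem sum_sub_val_add_sum {n : ℕ} {p : n.Partition} {S : Finset ℕ}
    (h : S ⊆ p.parts.toFinset) : (p.parts - S.val).sum + ∑ i ∈ S, i = n := by
  have := congrArg Multiset.sum (tsub_add_cancel_of_le (val_le_parts_of_subset h))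
  rwa [Multiset.sum_add, p.parts_sum, sum_val] at this

def partitionWithPartsEquiv {n : ℕ} {S : Finset ℕ} (hS : 0 ∉ S) (hn : ∑ i ∈ S, i ≤ n) :
    {p : n.Partition // S ⊆ p.parts.toFinset} ≃ (n - ∑ i ∈ S, i).Partition where
  toFun p := ⟨p.1.parts - S.val, fun hi => p.1.parts_pos (Multiset.mem_of_le tsub_le_self hi), by
    have := sum_sub_val_add_sum p.2; omega⟩
  invFun q := ⟨⟨q.parts + S.val,
    fun hi => (Multiset.mem_add.1 hi).elim q.parts_pos
      fun hiS => Nat.pos_of_ne_zero (ne_of_mem_of_not_mem hiS hS),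
    by rw [Multiset.sum_add, q.parts_sum, sum_val]; exact Nat.sub_add_cancel hn⟩,
    fun i hi => by simp [hi]⟩
  left_inv p := Subtype.ext <| Nat.Partition.ext <| tsub_add_cancel_of_le <|
    val_le_parts_of_subset p.2
  right_inv q := Nat.Partition.ext (add_tsub_cancel_right _ _)

theorem card_subset_parts_toFinset {n : ℕ} {S : Finset ℕ} (hS : 0 ∉ S) :
    Fintype.card {p : n.Partition // S ⊆ p.parts.toFinset} =
      if ∑ i ∈ S, i ≤ n then Fintype.card (n - ∑ i ∈ S, i).Partition else 0 := by
  split_ifs with hn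
  · exact Fintype.card_congr (partitionWithPartsEquiv hS hn)
  · exact Fintype.card_eq_zero_iff.2 ⟨fun p => hn (by have := sum_sub_val_add_sum p.2; omega)⟩

theorem sum_choose_card_parts_toFinset (n k : ℕ) :
    ∑ p : n.Partition, (#p.parts.toFinset + 1).choose k =
      ∑ B ∈ (range (n + 1)).powersetCard k,
        Fintype.card {p : n.Partition // B.erase 0 ⊆ p.parts.toFinset} := by
  simp_rw [Fintype.card_subtype, ← subset_insert_iff]
  refine Eq.trans ?_ (sum_card_bipartiteAbove_eq_sum_card_bipartiteBelow
    (r := fun (p : n.Partition) B => B ⊆ insert 0 p.parts.toFinset))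
  refine sum_congr rfl fun p _ => ?_
  have hsub : insert 0 p.parts.toFinset ⊆ range (n + 1) :=
    insert_subset (by simp) fun x hx =>
      mem_range_succ_iff.2 (p.le_of_mem_parts (Multiset.mem_toFinset.1 hx))
  have hbip : (powersetCard k (range (n + 1))).bipartiteAbove
      (fun p B => B ⊆ insert 0 p.parts.toFinset) p = powersetCard k (insert 0 p.parts.toFinset) := by
    ext B
    simp only [bipartiteAbove, mem_filter, mem_powersetCard]
    exact ⟨fun h => ⟨h.2, h.1.2⟩, fun h => ⟨⟨h.1.trans hsub, h.2⟩, h.1⟩⟩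
  rw [hbip, card_powersetCard, card_insert_of_notMem]
  exact fun h => (p.parts_pos (Multiset.mem_toFinset.1 h)).ne' rfl

theorem sum_card_subsetsWithSum_mul_card (n k : ℕ) :
    ∑ b ∈ range (n + 1), #(subsetsWithSum k b) * Fintype.card (n - b).Partition =
      ∑ p : n.Partition, (#p.parts.toFinset + 1).choose k := by
  have h := sum_card_subsetsWithSum_smul n k (fun a => Fintype.card a.Partition)
  simp only [smul_eq_mul] at h
  rw [h, sum_choose_card_parts_toFinset]
  refine sum_congr rfl fun B _ => ?_
  rw [card_subset_parts_toFinset (notMem_erase 0 B), sum_erase B (f := fun i => i) rfl]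

end Nat.Partition

theorem sum_range_neg_one_pow_mul_choose_mul_choose {R : Type*} [CommRing R] {D N : ℕ} (m : ℕ)
    (hDN : D < N) :
    ∑ k ∈ range N, (-1 : R) ^ k * D.choose k * k.choose m = if D = m then (-1) ^ m else 0 := by
  rw [← sum_subset (s₁ := range (D + 1)) (range_subset_range.2 hDN) fun k _ hk => by
    rw [Nat.choose_eq_zero_of_lt (by simpa using hk)]; simp]
  rcases lt_or_ge D m with hDm | hmD
  · rw [if_neg hDm.ne]
    exact sum_eq_zero fun k hk => by
      rw [Nat.choose_eq_zero_of_lt (lt_of_le_of_lt (mem_range_succ_iff.1 hk) hDm)]; simp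
  obtain ⟨e, rfl⟩ := Nat.exists_eq_add_of_le hmD
  have halt : ∑ j ∈ range (e + 1), (-1 : R) ^ j * e.choose j = if e = 0 then 1 else 0 := by
    exact_mod_cast congrArg (Int.cast : ℤ → R) Int.alternating_sum_range_choose
  rw [show m + e + 1 = m + (e + 1) by ring, sum_range_add,
    sum_eq_zero fun k hk => by rw [Nat.choose_eq_zero_of_lt (mem_range.1 hk)]; simp, zero_add]
  calc ∑ j ∈ range (e + 1), (-1 : R) ^ (m + j) * (m + e).choose (m + j) * (m + j).choose m
      = (-1) ^ m * (m + e).choose m * ∑ j ∈ range (e + 1), (-1 : R) ^ j * e.choose j := by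
        rw [mul_sum]
        refine sum_congr rfl fun j hj => ?_
        have := Nat.choose_mul (n := m + e) (k := m + j) (s := m) (Nat.le_add_right m j)
        simp only [Nat.add_sub_cancel_left] at this
        rw [pow_add, mul_assoc _ _ ((m + j).choose m : R), ← Nat.cast_mul, this]
        push_cast; ring
    _ = _ := by
        rw [halt]
        by_cases he : e = 0 <;> simp [he]

section CommSemiring

variable {R : Type*} [CommSemiring R]

theorem mk_card_subsetsWithSum_succ (k : ℕ) :
    PowerSeries.mk (fun b => (#(subsetsWithSum (k + 1) b) : R)) =
      X ^ k * PowerSeries.mk (fun b => (#(subsetsWithSum k b) : R)) +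
        X ^ (k + 1) * PowerSeries.mk (fun b => (#(subsetsWithSum (k + 1) b) : R)) := by
  ext b
  rw [coeff_mk, card_subsetsWithSum_succ, map_add, coeff_X_pow_mul', coeff_X_pow_mul']
  split_ifs <;> simp

theorem coeff_mk_card_subsetsWithSum_mul_mk_card_partition (n k : ℕ) :
    coeff n (PowerSeries.mk (fun b => (#(subsetsWithSum k b) : R)) *
        PowerSeries.mk (fun a => (Fintype.card a.Partition : R))) =
      ∑ p : n.Partition, ((#p.parts.toFinset + 1).choose k : R) := by
  rw [coeff_mul, Nat.sum_antidiagonal_eq_sum_range_succ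
    (fun b a => coeff b (PowerSeries.mk _) * coeff a (PowerSeries.mk _))]
  simpa using congrArg (Nat.cast : ℕ → R) (Nat.Partition.sum_card_subsetsWithSum_mul_card n k)

end CommSemiring

theorem mk_card_subsetsWithSum {K : Type*} [Field K] (k : ℕ) :
    PowerSeries.mk (fun b => (#(subsetsWithSum k b) : K)) =
      X ^ (k * (k - 1) / 2) * (∏ d ∈ range k, (1 - X ^ (d + 1) : K⟦X⟧))⁻¹ := by
  induction k with
  | zero =>
    ext b
    simp [card_subsetsWithSum_zero, coeff_one]
  | succ k ih =>
    have h : constantCoeff (1 - X ^ (k + 1) : K⟦X⟧) ≠ 0 := by simp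
    calc _ = X ^ k * PowerSeries.mk (fun b => (#(subsetsWithSum k b) : K)) *
          (1 - X ^ (k + 1))⁻¹ := by
          rw [eq_mul_inv_iff_mul_eq h]
          linear_combination mk_card_subsetsWithSum_succ (R := K) k
      _ = _ := by
          rw [ih, prod_range_succ, PowerSeries.mul_inv_rev, Nat.triangle_succ, pow_add]
          ring

section PiTopology

open scoped PowerSeries.WithPiTopology
open PowerSeries.WithPiTopology

theorem tprod_one_sub_X_pow_mul_mk_card_partition {R : Type*} [CommRing R] [TopologicalSpace R]
    [IsTopologicalRing R] [T2Space R] :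
    (∏' i, (1 - X ^ (i + 1) : R⟦X⟧)) * PowerSeries.mk (fun n => (Fintype.card n.Partition : R)) =
      1 := by
  have hG := Nat.Partition.hasProd_powerSeriesMk_card_restricted R (fun _ => True)
  simp only [if_true, Nat.Partition.restricted, implies_true, filter_true, card_univ] at hG
  have h := (multipliable_one_sub_X_pow R).hasProd.mul hG
  have hgeom (i : ℕ) : (1 - X ^ (i + 1) : R⟦X⟧) * ∑' j, X ^ ((i + 1) * j) = 1 := by
    simpa [pow_mul] using one_sub_mul_tsum_pow_of_constantCoeff_eq_zero (f := (X : R⟦X⟧) ^ (i + 1))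
      (by simp)
  simp only [hgeom] at h
  exact h.unique hasProd_one

theorem hasSum_mk_card_partition_mul {K : Type*} [Field K] [TopologicalSpace K] {m : ℕ}
    (hm : 1 ≤ m) :
    HasSum (fun k : ℕ => PowerSeries.mk (fun n => (Fintype.card n.Partition : K)) *
        (C ((-1 : K) ^ ((k : ℤ) - (m : ℤ)) * (k.choose m : K)) * X ^ (k * (k - 1) / 2) *
          (∏ d ∈ range k, (1 - X ^ (d + 1) : K⟦X⟧))⁻¹))
      (PowerSeries.mk fun n =>
        (Fintype.card {l : n.Partition // l.parts.toFinset.card = m - 1} : K)) := by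
  rw [hasSum_iff_hasSum_coeff]
  intro n
  have hsign (k : ℕ) : (-1 : K) ^ ((k : ℤ) - m) = (-1) ^ m * (-1) ^ k := by
    rw [zpow_sub₀ (by norm_num), zpow_natCast, zpow_natCast, div_eq_mul_inv, ← inv_pow, inv_neg_one,
      mul_comm]
  have hcoeff (k : ℕ) : coeff n (PowerSeries.mk (fun n => (Fintype.card n.Partition : K)) *
      (C ((-1 : K) ^ ((k : ℤ) - (m : ℤ)) * (k.choose m : K)) * X ^ (k * (k - 1) / 2) *
        (∏ d ∈ range k, (1 - X ^ (d + 1) : K⟦X⟧))⁻¹)) =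
      (-1) ^ m * ∑ p : n.Partition, (-1) ^ k * ((#p.parts.toFinset + 1).choose k : K) * k.choose m := by
    rw [mul_assoc (C _), ← mk_card_subsetsWithSum, mul_left_comm, coeff_C_mul, mul_comm (PowerSeries.mk _),
      coeff_mk_card_subsetsWithSum_mul_mk_card_partition, hsign, mul_sum, mul_sum]
    refine sum_congr rfl fun p _ => by ring
  simp only [hcoeff, coeff_mk]
  convert hasSum_sum_of_ne_finset_zero (L := SummationFilter.unconditional ℕ) (s := range (n + 2))
    (fun k hk => ?_) using 1
  · rw [← mul_sum, sum_comm, Fintype.card_subtype, natCast_card_filter, mul_sum]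
    refine sum_congr rfl fun p _ => ?_
    rw [sum_range_neg_one_pow_mul_choose_mul_choose m (by have := p.card_parts_toFinset_le; omega)]
    by_cases h : #p.parts.toFinset = m - 1
    · rw [if_pos h, if_pos (by omega), ← mul_pow]
      simp
    · rw [if_neg h, if_neg (by omega), mul_zero]
  · rw [mem_range, not_lt] at hk
    refine mul_eq_zero_of_right _ (sum_eq_zero fun p _ => ?_)
    rw [Nat.choose_eq_zero_of_lt (by have := p.card_parts_toFinset_le; omega)]
    simp

theorem powerSeriesMk_card_distinctPartSizes_eq {K : Type*} [Field K] [TopologicalSpace K]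
    [IsTopologicalRing K] [T2Space K] (m : ℕ) (hm : 1 ≤ m) :
    PowerSeries.mk
        (fun n => (Fintype.card {l : n.Partition // l.parts.toFinset.card = m - 1} : K)) =
      (∏' d : ℕ, (1 - X ^ (d + 1) : K⟦X⟧))⁻¹ *
        ∑' k : ℕ,
          C ((-1 : K) ^ ((k : ℤ) - (m : ℤ)) * (k.choose m : K)) * X ^ (k * (k - 1) / 2) *
            (∏ d ∈ range k, (1 - X ^ (d + 1) : K⟦X⟧))⁻¹ := by
  set P := ∏' d : ℕ, (1 - X ^ (d + 1) : K⟦X⟧)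
  have hPp : P * _ = 1 := tprod_one_sub_X_pow_mul_mk_card_partition
  have hP : constantCoeff P ≠ 0 := fun h => by simpa [h] using congrArg constantCoeff hPp
  have hsum := (hasSum_mk_card_partition_mul hm).mul_left P
  simp only [← mul_assoc, hPp, one_mul] at hsum
  rw [hsum.tsum_eq, ← mul_assoc, PowerSeries.inv_mul_cancel _ hP, one_mul]

end PiTopology

theorem topologicalSpace_powerSeries_rat_eq :
    (inferInstance : TopologicalSpace ℚ⟦X⟧) = PowerSeries.WithPiTopology.instTopologicalSpace ℚ :=
  ((Homeomorph.piCongrLeft (Y := fun _ => ℚ)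
    (Finsupp.uniqueLinearEquiv ℕ ℕ ()).toEquiv.symm).symm.isInducing.eq_induced).symm

open PowerSeries in
/-- For `m ≥ 1`, the generating function of the number `c_m(n)` of partitions of `n`
with exactly `m - 1` distinct part sizes (equivalently, the Euler characteristics
`χ(B^{[n]}_m)`) satisfies
`∑_n c_m(n) qⁿ = ∏_{d=1}^∞ (1 - q^d)⁻¹ ·
   ∑_{k=0}^∞ (-1)^{k-m} q^{k(k-1)/2} binom(k,m) ∏_{d=1}^{k} (1 - q^d)⁻¹`. -/
theorem stmt11 (m : ℕ) (hm : 1 ≤ m) :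
    PowerSeries.mk
        (fun n => (Fintype.card {l : n.Partition // l.parts.toFinset.card = m - 1} : ℚ)) =
      (∏' d : ℕ, (1 - X ^ (d + 1) : PowerSeries ℚ))⁻¹ *
        ∑' k : ℕ,
          C (R := ℚ) ((-1 : ℚ) ^ ((k : ℤ) - (m : ℤ)) * (k.choose m : ℚ)) * X ^ (k * (k - 1) / 2) *
            (∏ d ∈ Finset.range k, (1 - X ^ (d + 1) : PowerSeries ℚ))⁻¹ := by
  have h := powerSeriesMk_card_distinctPartSizes_eq (K := ℚ) m hm
  rwa [← topologicalSpace_powerSeries_rat_eq] at h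

end
end
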